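/- Let λ > 0, let M = [[2,1],[1,2]] with quadratic form Q(n) = n₁²+n₁n₂+n₂², and define the tropical theta function φ : ℝ² → ℝ by φ(ξ) = sup_{n ∈ ℤ²} (⟨n, ξ⟩ − λ·Q(n)). Then: (a) for each ξ the supremum is finite and attained at some n ∈ ℤ²; and (b) for all m ∈ ℤ² and ξ ∈ ℝ², φ(ξ + λ·Mm) = φ(ξ) + ⟨m, ξ⟩ + λ·Q(m). -/

import Mathlib

/-!
Since `Q(n) ≥ ‖n‖² / 2` for the sup norm, each term `⟨n, ξ⟩ − λ Q(n)` is bounded by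
`(|ξ₁| + |ξ₂|) ‖n‖ − λ ‖n‖² / 2`, so the terms tend to `−∞` along the cofinite filter of `ℤ²`
and the supremum is a maximum. Completing the square gives
`⟨n + m, ξ + λ M m⟩ − λ Q(n + m) = ⟨n, ξ⟩ − λ Q(n) + ⟨m, ξ⟩ + λ Q(m)`, so translating by `m`
identifies the two families of terms up to this constant.
-/

open Filter Set

namespace TropicalTheta

def quadForm (n : ℤ × ℤ) : ℝ := (n.1 : ℝ) ^ 2 + (n.1 : ℝ) * (n.2 : ℝ) + (n.2 : ℝ) ^ 2

def term (lam : ℝ) (ξ : ℝ × ℝ) (n : ℤ × ℤ) : ℝ :=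
  (n.1 : ℝ) * ξ.1 + (n.2 : ℝ) * ξ.2 - lam * quadForm n

/-- The vector `λ M m` with `M = [[2,1],[1,2]]`. -/
def shift (lam : ℝ) (m : ℤ × ℤ) : ℝ × ℝ :=
  (lam * (2 * (m.1 : ℝ) + (m.2 : ℝ)), lam * ((m.1 : ℝ) + 2 * (m.2 : ℝ)))

lemma norm_sq_le_two_mul_quadForm (n : ℤ × ℤ) : ‖n‖ ^ 2 ≤ 2 * quadForm n := by
  have h1 : ‖n.1‖ ^ 2 ≤ 2 * quadForm n := by
    rw [Int.norm_eq_abs, sq_abs, quadForm]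
    nlinarith [sq_nonneg ((n.1 : ℝ) + 2 * n.2)]
  have h2 : ‖n.2‖ ^ 2 ≤ 2 * quadForm n := by
    rw [Int.norm_eq_abs, sq_abs, quadForm]
    nlinarith [sq_nonneg (2 * (n.1 : ℝ) + n.2)]
  rw [Prod.norm_def]
  rcases max_choice ‖n.1‖ ‖n.2‖ with h | h <;> rw [h] <;> assumption

lemma term_le {lam : ℝ} (hlam : 0 ≤ lam) (ξ : ℝ × ℝ) (n : ℤ × ℤ) :
    term lam ξ n ≤ (|ξ.1| + |ξ.2|) * ‖n‖ - lam / 2 * ‖n‖ ^ 2 := by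
  have hcoord (k : ℤ) (x : ℝ) (hk : ‖k‖ ≤ ‖n‖) : (k : ℝ) * x ≤ |x| * ‖n‖ := by
    rw [Int.norm_eq_abs] at hk
    calc (k : ℝ) * x ≤ |(k : ℝ)| * |x| := by rw [← abs_mul]; exact le_abs_self _
      _ ≤ |x| * ‖n‖ := by rw [mul_comm]; gcongr
  have h1 := hcoord n.1 ξ.1 (norm_fst_le n)
  have h2 := hcoord n.2 ξ.2 (norm_snd_le n)
  have hQ := mul_le_mul_of_nonneg_left (norm_sq_le_two_mul_quadForm n) hlam
  rw [term]
  linarith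

lemma tendsto_term_cofinite_atBot {lam : ℝ} (hlam : 0 < lam) (ξ : ℝ × ℝ) :
    Tendsto (term lam ξ) cofinite atBot := by
  set C := |ξ.1| + |ξ.2|
  have hpoly : Tendsto (fun t : ℝ => t * (C + -(lam / 2) * t)) atTop atBot :=
    tendsto_id.atTop_mul_atBot₀ <| tendsto_atBot_add_const_left _ C <|
      tendsto_id.const_mul_atTop_of_neg (by linarith)
  have hnorm : Tendsto (‖·‖ : ℤ × ℤ → ℝ) cofinite atTop :=
    cocompact_eq_cofinite (ℤ × ℤ) ▸ tendsto_norm_cocompact_atTop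
  refine tendsto_atBot_mono (fun n => ?_) (hpoly.comp hnorm)
  have := term_le hlam.le ξ n
  simp only [Function.comp_apply]
  linarith

lemma exists_isGreatest_range_term {lam : ℝ} (hlam : 0 < lam) (ξ : ℝ × ℝ) :
    ∃ n₀, IsGreatest (range (term lam ξ)) (term lam ξ n₀) := by
  obtain ⟨n₀, hn₀⟩ := (tendsto_term_cofinite_atBot hlam ξ).exists_forall_ge
  exact ⟨n₀, mem_range_self n₀, forall_mem_range.2 hn₀⟩

lemma term_add_shift (lam : ℝ) (ξ : ℝ × ℝ) (m n : ℤ × ℤ) :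
    term lam (ξ + shift lam m) (n + m) =
      term lam ξ n + ((m.1 : ℝ) * ξ.1 + (m.2 : ℝ) * ξ.2 + lam * quadForm m) := by
  simp only [term, quadForm, shift, Prod.fst_add, Prod.snd_add, Int.cast_add]
  ring

lemma range_term_add_shift (lam : ℝ) (ξ : ℝ × ℝ) (m : ℤ × ℤ) :
    range (term lam (ξ + shift lam m)) =
      (· + ((m.1 : ℝ) * ξ.1 + (m.2 : ℝ) * ξ.2 + lam * quadForm m)) '' range (term lam ξ) := by
  rw [← range_comp, ← (Equiv.addRight m).surjective.range_comp]
  exact congrArg range (funext (term_add_shift lam ξ m))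

lemma sSup_range_term_add_shift {lam : ℝ} (hlam : 0 < lam) (ξ : ℝ × ℝ) (m : ℤ × ℤ) :
    sSup (range (term lam (ξ + shift lam m))) =
      sSup (range (term lam ξ)) + ((m.1 : ℝ) * ξ.1 + (m.2 : ℝ) * ξ.2 + lam * quadForm m) := by
  obtain ⟨n₀, hn₀⟩ := exists_isGreatest_range_term hlam ξ
  rw [range_term_add_shift, ((add_left_mono).map_isGreatest hn₀).csSup_eq, hn₀.csSup_eq]

end TropicalTheta

open TropicalTheta in
/-- The tropical theta function `φ(ξ) = sup_{n ∈ ℤ²} (⟨n, ξ⟩ − λ Q(n))` with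
`Q(n) = n₁² + n₁n₂ + n₂²`:
(a) the supremum is finite and attained; (b) quasi-periodicity
`φ(ξ + λ·Mm) = φ(ξ) + ⟨m, ξ⟩ + λ·Q(m)` for `M = [[2,1],[1,2]]`. -/
theorem tropical_theta (lam : ℝ) (hlam : 0 < lam) :
    (∀ ξ : ℝ × ℝ, ∃ n₀ : ℤ × ℤ,
        IsGreatest
          (Set.range fun n : ℤ × ℤ =>
            (n.1 : ℝ) * ξ.1 + (n.2 : ℝ) * ξ.2
              - lam * ((n.1 : ℝ) ^ 2 + (n.1 : ℝ) * (n.2 : ℝ) + (n.2 : ℝ) ^ 2))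
          ((n₀.1 : ℝ) * ξ.1 + (n₀.2 : ℝ) * ξ.2
              - lam * ((n₀.1 : ℝ) ^ 2 + (n₀.1 : ℝ) * (n₀.2 : ℝ) + (n₀.2 : ℝ) ^ 2)))
    ∧
    (∀ (m : ℤ × ℤ) (ξ : ℝ × ℝ),
        sSup (Set.range fun n : ℤ × ℤ =>
            (n.1 : ℝ) * (ξ.1 + lam * (2 * (m.1 : ℝ) + (m.2 : ℝ)))
              + (n.2 : ℝ) * (ξ.2 + lam * ((m.1 : ℝ) + 2 * (m.2 : ℝ)))
              - lam * ((n.1 : ℝ) ^ 2 + (n.1 : ℝ) * (n.2 : ℝ) + (n.2 : ℝ) ^ 2))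
          = sSup (Set.range fun n : ℤ × ℤ =>
              (n.1 : ℝ) * ξ.1 + (n.2 : ℝ) * ξ.2
                - lam * ((n.1 : ℝ) ^ 2 + (n.1 : ℝ) * (n.2 : ℝ) + (n.2 : ℝ) ^ 2))
            + ((m.1 : ℝ) * ξ.1 + (m.2 : ℝ) * ξ.2)
            + lam * ((m.1 : ℝ) ^ 2 + (m.1 : ℝ) * (m.2 : ℝ) + (m.2 : ℝ) ^ 2)) := by
  refine ⟨exists_isGreatest_range_term hlam, fun m ξ => ?_⟩
  rw [add_assoc]
  exact sSup_range_term_add_shift hlam ξ m
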